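/- For Δ₁, Δ₂ ∈ ℝ define θ₁₂(Δ₁,Δ₂) = (2π + Δ₁ − Δ₂)/3, θ₁₃(Δ₁,Δ₂) = (2π − 2Δ₁ − Δ₂)/3, θ₂₃(Δ₁,Δ₂) = (2π + Δ₁ + 2Δ₂)/3, and Δ(Δ₁,Δ₂) = cos θ₂₃ · cos Δ₁ + cos θ₁₃ · cos Δ₂ + cos θ₁₂ · cos(Δ₁ + Δ₂). Suppose Δ₁ > 0, Δ₂ > 0 and 2Δ₁ + Δ₂ < π/2 (equivalently, the smallest subtended angle θ₁₃ exceeds π/2). Then both partial derivatives of Δ are strictly positive at (Δ₁, Δ₂): the derivative of Δ₁ ↦ Δ(Δ₁,Δ₂) is positive (so, for fixed Δ₂, Δ increases as Δ₁ increases), and the derivative of Δ₂ ↦ Δ(Δ₁,Δ₂) is positive (so, for fixed Δ₁, Δ increases as Δ₂ increases). -/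
import Mathlib


open Real

/-- The gap `Δ(Δ₁,Δ₂)` between the optimal and actual Fisher information
determinants (up to the positive factor `1/(r⁴σ⁴)`), expressed in terms of the
deviations `Δ₁ = θ₁₂ − θ₁₃` and `Δ₂ = θ₂₃ − θ₁₂` from the equilateral
configuration, where `θ₁₂ = (2π + Δ₁ − Δ₂)/3`, `θ₁₃ = (2π − 2Δ₁ − Δ₂)/3`,
`θ₂₃ = (2π + Δ₁ + 2Δ₂)/3`:
`Δ = cos θ₂₃ cos Δ₁ + cos θ₁₃ cos Δ₂ + cos θ₁₂ cos(Δ₁ + Δ₂)`. -/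
noncomputable def fisherGap (d1 d2 : ℝ) : ℝ :=
  cos ((2 * π + d1 + 2 * d2) / 3) * cos d1 +
    cos ((2 * π - 2 * d1 - d2) / 3) * cos d2 +
    cos ((2 * π + d1 - d2) / 3) * cos (d1 + d2)

/-- If `Δ₁ > 0`, `Δ₂ > 0` and `2Δ₁ + Δ₂ < π/2` (equivalently,
the smallest subtended angle `θ₁₃` exceeds `π/2`), then both partial
derivatives of `Δ` are strictly positive at `(Δ₁, Δ₂)`: for fixed `Δ₂`, `Δ`
increases as `Δ₁` increases, and for fixed `Δ₁`, `Δ` increases as `Δ₂`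
increases. -/
theorem fisherGap_partials_pos (D1 D2 : ℝ)
    (h1 : 0 < D1) (h2 : 0 < D2) (h3 : 2 * D1 + D2 < π / 2) :
    0 < deriv (fun d => fisherGap d D2) D1 ∧
    0 < deriv (fun d => fisherGap D1 d) D2 := by
  have hπ := Real.pi_pos
  set a := (2 * π + D1 + 2 * D2) / 3 with ha_def
  set b := (2 * π - 2 * D1 - D2) / 3 with hb_def
  set c := (2 * π + D1 - D2) / 3 with hc_def
  -- cosine negativity
  have hca : cos a < 0 := by
    apply Real.cos_neg_of_pi_div_two_lt_of_lt <;> [skip; skip] <;>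
      simp only [ha_def] <;> nlinarith
  have hcb : cos b < 0 := by
    apply Real.cos_neg_of_pi_div_two_lt_of_lt <;> simp only [hb_def] <;> nlinarith
  have hcc : cos c < 0 := by
    apply Real.cos_neg_of_pi_div_two_lt_of_lt <;> simp only [hc_def] <;> nlinarith
  have hs1 : 0 < sin D1 := Real.sin_pos_of_pos_of_lt_pi h1 (by nlinarith)
  have hs2 : 0 < sin D2 := Real.sin_pos_of_pos_of_lt_pi h2 (by nlinarith)
  have hs12 : 0 < sin (D1 + D2) :=
    Real.sin_pos_of_pos_of_lt_pi (by linarith) (by nlinarith)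
  constructor
  · -- ∂/∂d1
    have H1 : HasDerivAt (fun d : ℝ => (2 * π + d + 2 * D2) / 3) (1/3) D1 := by
      simpa using (((hasDerivAt_id D1).const_add (2*π)).add_const (2*D2)).div_const 3
    have H2 : HasDerivAt (fun d : ℝ => (2 * π - 2 * d - D2) / 3) (-2/3) D1 := by
      have := ((((hasDerivAt_id D1).const_mul 2).const_sub (2*π)).sub_const D2).div_const 3
      simpa using this
    have H3 : HasDerivAt (fun d : ℝ => (2 * π + d - D2) / 3) (1/3) D1 := by
      simpa using (((hasDerivAt_id D1).const_add (2*π)).sub_const D2).div_const 3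
    have H12 : HasDerivAt (fun d : ℝ => d + D2) 1 D1 := by
      simpa using (hasDerivAt_id D1).add_const D2
    have H : HasDerivAt (fun d => fisherGap d D2)
        ((-sin a * (1/3)) * cos D1 + cos a * (-sin D1)
          + (-sin b * (-2/3)) * cos D2
          + ((-sin c * (1/3)) * cos (D1 + D2) + cos c * (-sin (D1 + D2) * 1))) D1 := by
      unfold fisherGap
      exact ((H1.cos.mul (Real.hasDerivAt_cos D1)).add (H2.cos.mul_const (cos D2))).add
        (H3.cos.mul H12.cos)
    rw [H.deriv]
    have hb1 : a = b + D1 + D2 := by simp only [ha_def, hb_def]; ring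
    have hb2 : c = b + D1 := by simp only [hc_def, hb_def]; ring
    have key : (-sin a * (1/3)) * cos D1 + cos a * (-sin D1)
          + (-sin b * (-2/3)) * cos D2
          + ((-sin c * (1/3)) * cos (D1 + D2) + cos c * (-sin (D1 + D2) * 1))
        = -(4/3) * (cos a * sin D1 + cos c * sin (D1 + D2)) := by
      rw [hb1, hb2]
      simp only [Real.sin_add, Real.cos_add]
      linear_combination (-(2:ℝ)/3 * sin b * cos D2) * Real.sin_sq_add_cos_sq D1
    rw [key]
    nlinarith [mul_neg_of_neg_of_pos hca hs1, mul_neg_of_neg_of_pos hcc hs12]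
  · -- ∂/∂d2
    have H1 : HasDerivAt (fun d : ℝ => (2 * π + D1 + 2 * d) / 3) (2/3) D2 := by
      have h0 : HasDerivAt (fun d : ℝ => 2 * π + D1 + 2 * d) 2 D2 := by
        simpa using ((hasDerivAt_id D2).const_mul 2).const_add (2 * π + D1)
      simpa using h0.div_const 3
    have H2 : HasDerivAt (fun d : ℝ => (2 * π - 2 * D1 - d) / 3) (-1/3) D2 := by
      have := ((hasDerivAt_id D2).const_sub (2*π - 2*D1)).div_const 3
      simpa using this
    have H3 : HasDerivAt (fun d : ℝ => (2 * π + D1 - d) / 3) (-1/3) D2 := by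
      have := ((hasDerivAt_id D2).const_sub (2*π + D1)).div_const 3
      simpa using this
    have H12 : HasDerivAt (fun d : ℝ => D1 + d) 1 D2 := by
      simpa using (hasDerivAt_id D2).const_add D1
    have H : HasDerivAt (fun d => fisherGap D1 d)
        (((-sin a * (2/3)) * cos D1)
          + ((-sin b * (-1/3)) * cos D2 + cos b * (-sin D2))
          + ((-sin c * (-1/3)) * cos (D1 + D2) + cos c * (-sin (D1 + D2) * 1))) D2 := by
      unfold fisherGap
      exact ((H1.cos.mul_const (cos D1)).add (H2.cos.mul (Real.hasDerivAt_cos D2))).add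
        (H3.cos.mul H12.cos)
    rw [H.deriv]
    have hb1 : a = b + D1 + D2 := by simp only [ha_def, hb_def]; ring
    have hb2 : c = b + D1 := by simp only [hc_def, hb_def]; ring
    have key : ((-sin a * (2/3)) * cos D1)
          + ((-sin b * (-1/3)) * cos D2 + cos b * (-sin D2))
          + ((-sin c * (-1/3)) * cos (D1 + D2) + cos c * (-sin (D1 + D2) * 1))
        = -(4/3) * (cos c * sin (D1 + D2) + cos b * sin D2) := by
      rw [hb1, hb2]
      simp only [Real.sin_add, Real.cos_add]
      linear_combination (-(1:ℝ)/3 * sin b * cos D2 - (1:ℝ)/3 * cos b * sin D2) * Real.sin_sq_add_cos_sq D1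
    rw [key]
    nlinarith [mul_neg_of_neg_of_pos hcc hs12, mul_neg_of_neg_of_pos hcb hs2]
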